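/- Let m ≥ 28, X ~ Bin(m, 1/2), and for integer k with m/2 < k ≤ m-1 set K = k-1, M = m-1, ε = (2K - M)/M, and γ(ε) = Σ_{r≥0} ε^{2r}/((2r+3)(2r+4)). If ε ≤ √(11/12) then γ(ε) ≤ 1; more precisely γ(ε) = ((1+ε)log(1+ε) + (1-ε)log(1-ε) - ε²)/(2ε⁴) for ε ∈ (0,1), and γ is increasing, with γ(ε) ≤ 1/(12(1-ε²)). -/

import Mathlib

open Real Finset

/-- the Carter–Pollard remainder function γ(ε) = Σ_{r≥0} ε^{2r}/((2r+3)(2r+4)) -/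
noncomputable def carterGamma (ε : ℝ) : ℝ :=
  ∑' r : ℕ, ε ^ (2 * r) / ((2 * (r : ℝ) + 3) * (2 * (r : ℝ) + 4))

lemma aux_hasSum {x : ℝ} (h : |x| < 1) :
    HasSum (fun n : ℕ => x ^ (n + 2) / (((n : ℝ) + 1) * ((n : ℝ) + 2)))
      ((1 - x) * Real.log (1 - x) + x) := by
  have h1 := Real.hasSum_pow_div_log_of_abs_lt_one h
  have h2 : HasSum (fun n : ℕ => x * (x ^ (n + 1) / ((n : ℝ) + 1)))
      (x * (-Real.log (1 - x))) := h1.mul_left x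
  have h3 : HasSum (fun n : ℕ => x ^ (n + 2) / ((n : ℝ) + 2))
      ((-Real.log (1 - x)) - x) := by
    have h0 := (hasSum_nat_add_iff' (f := fun n : ℕ => x ^ (n + 1) / ((n : ℝ) + 1)) 1).mpr h1
    have e : (fun n : ℕ => x ^ (n + 1 + 1) / (((n : ℕ) + 1 : ℕ) + 1 : ℝ))
        = fun n : ℕ => x ^ (n + 2) / ((n : ℝ) + 2) := by
      ext n; push_cast; ring_nf
    simp only [Finset.range_one, Finset.sum_singleton, pow_one] at h0
    rw [e] at h0
    convert h0 using 1
    · rfl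
    · norm_num
  have e2 : (fun n : ℕ => x ^ (n + 2) / (((n : ℝ) + 1) * ((n : ℝ) + 2)))
      = fun n : ℕ => x * (x ^ (n + 1) / ((n : ℝ) + 1)) - x ^ (n + 2) / ((n : ℝ) + 2) := by
    ext n
    have hn1 : ((n : ℝ) + 1) ≠ 0 := by positivity
    have hn2 : ((n : ℝ) + 2) ≠ 0 := by positivity
    field_simp
    ring
  have hv : x * (-Real.log (1 - x)) - ((-Real.log (1 - x)) - x)
      = (1 - x) * Real.log (1 - x) + x := by ring
  rw [e2, ← hv]
  exact h2.sub h3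

lemma even_hasSum {x : ℝ} (h : |x| < 1) :
    HasSum (fun k : ℕ => 2 * x ^ (2 * k + 2) / ((2 * (k : ℝ) + 1) * (2 * (k : ℝ) + 2)))
      ((1 + x) * Real.log (1 + x) + (1 - x) * Real.log (1 - x)) := by
  have hx := aux_hasSum h
  have h' : |(-x)| < 1 := by rwa [abs_neg]
  have hx' := aux_hasSum h'
  set term := fun n : ℕ => x ^ (n + 2) / (((n : ℝ) + 1) * ((n : ℝ) + 2))
      + (-x) ^ (n + 2) / (((n : ℝ) + 1) * ((n : ℝ) + 2)) with hterm
  have hval : HasSum term ((1 + x) * Real.log (1 + x) + (1 - x) * Real.log (1 - x)) := by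
    have e : (1 - x) * Real.log (1 - x) + x + ((1 - -x) * Real.log (1 - -x) + -x)
        = (1 + x) * Real.log (1 + x) + (1 - x) * Real.log (1 - x) := by ring_nf
    rw [← e]
    exact hx.add hx'
  have h_eq : term ∘ (2 * ·) =
      fun k : ℕ => 2 * x ^ (2 * k + 2) / ((2 * (k : ℝ) + 1) * (2 * (k : ℝ) + 2)) := by
    ext k
    simp only [term, Function.comp]
    rw [Even.neg_pow ⟨k + 1, by ring⟩ x]
    push_cast
    ring
  rw [← h_eq, (mul_right_injective₀ (two_ne_zero' ℕ)).hasSum_iff]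
  · exact hval
  · intro m hm
    rw [range_two_mul, Set.mem_setOf_eq] at hm
    have hodd : Odd (m + 2) := by
      rcases Nat.even_or_odd m with he | ho
      · exact absurd he hm
      · obtain ⟨j, hj⟩ := ho; exact ⟨j + 1, by omega⟩
    simp only [term, Odd.neg_pow hodd x]
    ring

lemma carter_hasSum {ε : ℝ} (h0 : 0 < ε) (h1 : ε < 1) :
    HasSum (fun r : ℕ => ε ^ (2 * r) / ((2 * (r : ℝ) + 3) * (2 * (r : ℝ) + 4)))
      (((1 + ε) * Real.log (1 + ε) + (1 - ε) * Real.log (1 - ε) - ε ^ 2) / (2 * ε ^ 4)) := by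
  have habs : |ε| < 1 := by rw [abs_of_pos h0]; exact h1
  have hg := even_hasSum habs
  have hshift := (hasSum_nat_add_iff'
    (f := fun k : ℕ => 2 * ε ^ (2 * k + 2) / ((2 * (k : ℝ) + 1) * (2 * (k : ℝ) + 2))) 1).mpr hg
  simp only [Finset.range_one, Finset.sum_singleton, Nat.cast_zero] at hshift
  have hdiv := hshift.div_const (2 * ε ^ 4)
  have hε : ε ≠ 0 := ne_of_gt h0
  have e : (fun k : ℕ => 2 * ε ^ (2 * (k + 1) + 2) / ((2 * ((k : ℕ) + 1 : ℕ) + 1 : ℝ) *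
        (2 * ((k : ℕ) + 1 : ℕ) + 2)) / (2 * ε ^ 4))
      = fun r : ℕ => ε ^ (2 * r) / ((2 * (r : ℝ) + 3) * (2 * (r : ℝ) + 4)) := by
    ext k
    have hk3 : (2 * (k : ℝ) + 3) ≠ 0 := by positivity
    have hk4 : (2 * (k : ℝ) + 4) ≠ 0 := by positivity
    push_cast
    rw [show 2 * (k + 1) + 2 = 2 * k + 4 by ring, show 2 * k + 4 = 2 * k + 4 from rfl]
    field_simp
    ring
  rw [e] at hdiv
  convert hdiv using 1
  · rfl
  · norm_num

lemma carter_summable {ε : ℝ} (h0 : 0 ≤ ε) (h1 : ε < 1) :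
    Summable (fun r : ℕ => ε ^ (2 * r) / ((2 * (r : ℝ) + 3) * (2 * (r : ℝ) + 4))) := by
  have hgeo : Summable (fun r : ℕ => (ε ^ 2) ^ r) :=
    summable_geometric_of_lt_one (by positivity) (by nlinarith)
  refine Summable.of_nonneg_of_le (fun r => by positivity) (fun r => ?_) hgeo
  rw [pow_mul]
  refine div_le_self (by positivity) ?_
  nlinarith [Nat.cast_nonneg (α := ℝ) r]

/-- for ε ∈ (0,1), γ(ε) equals the closed form
((1+ε)log(1+ε) + (1-ε)log(1-ε) - ε²)/(2ε⁴), satisfies γ(ε) ≤ 1/(12(1-ε²)),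
hence γ(ε) ≤ 1 whenever ε ≤ √(11/12); moreover γ is increasing on (0,1). -/
theorem carterGamma_properties :
    (∀ ε : ℝ, 0 < ε → ε < 1 →
      carterGamma ε =
        ((1 + ε) * Real.log (1 + ε) + (1 - ε) * Real.log (1 - ε) - ε ^ 2) / (2 * ε ^ 4) ∧
      carterGamma ε ≤ 1 / (12 * (1 - ε ^ 2)) ∧
      (ε ≤ Real.sqrt (11 / 12) → carterGamma ε ≤ 1)) ∧
    MonotoneOn carterGamma (Set.Ioo (0 : ℝ) 1) := by
  constructor
  · intro ε h0 h1
    have hbound : carterGamma ε ≤ 1 / (12 * (1 - ε ^ 2)) := by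
      have hgeo : Summable (fun r : ℕ => (ε ^ 2) ^ r / 12) :=
        (summable_geometric_of_lt_one (by positivity) (by nlinarith)).div_const 12
      rw [carterGamma]
      have hle : (∑' r : ℕ, ε ^ (2 * r) / ((2 * (r : ℝ) + 3) * (2 * (r : ℝ) + 4))) ≤ ∑' r : ℕ, (ε ^ 2) ^ r / 12 := by
        refine Summable.tsum_le_tsum (fun r => ?_) (carter_summable h0.le h1) hgeo
        rw [pow_mul]
        exact div_le_div_of_nonneg_left (by positivity) (by norm_num)
          (by nlinarith [Nat.cast_nonneg (α := ℝ) r])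
      have hται : ∑' r : ℕ, (ε ^ 2) ^ r / 12 = 1 / (12 * (1 - ε ^ 2)) := by
        rw [tsum_div_const, tsum_geometric_of_lt_one (by positivity) (by nlinarith)]
        have : (1 : ℝ) - ε ^ 2 ≠ 0 := by nlinarith
        field_simp
      rw [hται] at hle
      exact hle
    refine ⟨by rw [carterGamma]; exact (carter_hasSum h0 h1).tsum_eq, hbound, fun hsq => ?_⟩
    have hc : ε ^ 2 ≤ 11 / 12 := by
      have := Real.sq_sqrt (show (0 : ℝ) ≤ 11 / 12 by norm_num)
      nlinarith [Real.sqrt_nonneg (11 / 12 : ℝ)]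
    refine hbound.trans ?_
    rw [div_le_one (by nlinarith)]
    nlinarith
  · intro a ha b hb hab
    rw [carterGamma, carterGamma]
    refine Summable.tsum_le_tsum (fun r => ?_) (carter_summable ha.1.le ha.2) (carter_summable hb.1.le hb.2)
    gcongr
    exact ha.1.le
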